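/- Let d ≥ 2 be an even integer and Θ a d-small symbol. Then there exists a finite sequence of d/2-cohook removals from Θ ending in a symbol with no d/2-cohooks; moreover, any two symbols with no d/2-cohooks obtained from Θ by finite sequences of d/2-cohook removals are either equal or obtained from one another by interchanging the two rows. -/

import Mathlib

open scoped Classical

/-- A β-set: a set of integers containing all sufficiently small integers
and no sufficiently large ones. -/
def IsBetaSet (X : Set ℤ) : Prop :=
  (∃ c : ℤ, ∀ z : ℤ, z < c → z ∈ X) ∧ (∃ C : ℤ, ∀ z : ℤ, C ≤ z → z ∉ X)

/-- `topB X = max X`. -/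
noncomputable def topB (X : Set ℤ) : ℤ := sSup X

/-- `botB X = max {z | every integer < z lies in X}`. -/
noncomputable def botB (X : Set ℤ) : ℤ := sSup {z : ℤ | ∀ w : ℤ, w < z → w ∈ X}

/-- The charge `s(X)` of a β-set `X`, computed with the cutoff `c = botB X`. -/
noncomputable def chargeB (X : Set ℤ) : ℤ :=
  ((X ∩ Set.Ici (botB X)).ncard : ℤ) + botB X - 1

/-- `elemSeq X j` is the `(j+1)`-st largest element of the β-set `X`. -/
noncomputable def elemSeq (X : Set ℤ) : ℕ → ℤ
  | 0 => sSup X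
  | n + 1 => sSup (X ∩ Set.Iio (elemSeq X n))

/-- The partition `λ(X)` of a β-set `X`, `0`-indexed: `partB X j = λ_{j+1}`,
recovered from `x_j = s(X) + λ_j - j + 1` where `x_j` is the `j`-th largest element. -/
noncomputable def partB (X : Set ℤ) (j : ℕ) : ℕ :=
  (elemSeq X j - chargeB X + j).toNat

/-- The size `|λ(X)|` of the partition of a β-set `X`. -/
noncomputable def sizeB (X : Set ℤ) : ℕ := ∑ᶠ j : ℕ, partB X j

/-- A partition, encoded as a weakly decreasing eventually zero function (0-indexed). -/
def IsPartition (μ : ℕ → ℕ) : Prop :=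
  (∀ j, μ (j + 1) ≤ μ j) ∧ ∃ N, ∀ j, N ≤ j → μ j = 0

/-- The β-set `{s + λ_j - j + 1 : j ≥ 1}` of the partition `μ` with charge `s`. -/
def betaOf (μ : ℕ → ℕ) (s : ℤ) : Set ℤ :=
  {x : ℤ | ∃ j : ℕ, x = s + (μ j : ℤ) - (j : ℤ)}

/-- The symbol `Θ = (X₁, X₂)` is `d`-small with defining intervals
`I₁ = [a₁,b₁]` and `I₂ = [a₂,b₂]`. -/
structure IsDSmallWith (d : ℤ) (X₁ X₂ : Set ℤ) (a₁ b₁ a₂ b₂ : ℤ) : Prop where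
  len₁ : b₁ - a₁ = d / 2 - 1
  len₂ : b₂ - a₂ = d / 2 - 1
  bot₁ : a₁ ≤ botB X₁
  bot₂ : a₂ ≤ botB X₂
  top₁ : topB X₁ ≤ b₁
  top₂ : topB X₂ ≤ b₂
  cong : d ∣ b₂ - (b₁ + d / 2)

/-- The symbol `Θ = (X₁, X₂)` is `d`-small: it admits some pair of defining intervals. -/
def IsDSmall (d : ℤ) (X₁ X₂ : Set ℤ) : Prop :=
  ∃ a₁ b₁ a₂ b₂ : ℤ, IsDSmallWith d X₁ X₂ a₁ b₁ a₂ b₂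

/-- The row (`1` or `2`) containing the right region. -/
def rightRow (b₁ b₂ : ℤ) : ℕ := if b₁ < b₂ then 2 else 1

/-- The row, as a β-set, containing the right region. -/
def rightSet (X₁ X₂ : Set ℤ) (b₁ b₂ : ℤ) : Set ℤ := if b₁ < b₂ then X₂ else X₁

/-- The row, as a β-set, containing the left region. -/
def leftSet (X₁ X₂ : Set ℤ) (b₁ b₂ : ℤ) : Set ℤ := if b₁ < b₂ then X₁ else X₂

/-- The cardinality `kd` of the middle region. -/
def middleLen (d b₁ b₂ : ℤ) : ℤ := |b₂ - b₁| - d / 2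

/-- The alphabet `{∧, ∨, ×, ∘}` of up-down diagrams: `up = ∧`, `dn = ∨`,
`cross = ×`, `circ = ∘`. -/
inductive UD : Type
  | up
  | dn
  | cross
  | circ
deriving DecidableEq

/-- The up-down diagram `w_ud(Θ)` of a `d`-small symbol with defining intervals:
`wud d X₁ X₂ b₁ b₂ i` is the letter `w_i` for `1 ≤ i ≤ d/2`.  Here the right
region is `[m+1, m+d/2]` with `m = max b₁ b₂ - d/2`, `β_i = m + i`, and
`β_i - kd - d/2 = β_i - |b₂ - b₁|`. -/
noncomputable def wud (d : ℤ) (X₁ X₂ : Set ℤ) (b₁ b₂ : ℤ) (i : ℤ) : UD :=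
  if (max b₁ b₂ - d / 2 + i) ∈ rightSet X₁ X₂ b₁ b₂ then
    if (max b₁ b₂ - d / 2 + i) - |b₂ - b₁| ∈ leftSet X₁ X₂ b₁ b₂ then UD.cross else UD.up
  else
    if (max b₁ b₂ - d / 2 + i) - |b₂ - b₁| ∈ leftSet X₁ X₂ b₁ b₂ then UD.dn else UD.circ

/-- Removing an `e`-cohook in row `1` (the rows get interchanged afterwards). -/
def RemoveCohookRow1 (e : ℤ) (Θ Θ' : Set ℤ × Set ℤ) : Prop :=
  ∃ x : ℤ, x ∈ Θ.1 ∧ x - e ∉ Θ.2 ∧ Θ' = (Θ.2 ∪ {x - e}, Θ.1 \ {x})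

/-- Removing an `e`-cohook in row `2` (the rows get interchanged afterwards). -/
def RemoveCohookRow2 (e : ℤ) (Θ Θ' : Set ℤ × Set ℤ) : Prop :=
  ∃ x : ℤ, x ∈ Θ.2 ∧ x - e ∉ Θ.1 ∧ Θ' = (Θ.2 \ {x}, Θ.1 ∪ {x - e})

/-- Removing an `e`-cohook. -/
def RemoveCohook (e : ℤ) (Θ Θ' : Set ℤ × Set ℤ) : Prop :=
  RemoveCohookRow1 e Θ Θ' ∨ RemoveCohookRow2 e Θ Θ'

/-- The symbol `Θ` has an `e`-cohook. -/
def HasCohook (e : ℤ) (Θ : Set ℤ × Set ℤ) : Prop :=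
  (∃ x : ℤ, x ∈ Θ.1 ∧ x - e ∉ Θ.2) ∨ (∃ x : ℤ, x ∈ Θ.2 ∧ x - e ∉ Θ.1)

/-- `C` is an `e`-cocore of `Θ`: a symbol with no `e`-cohooks obtained from `Θ`
by a finite sequence of `e`-cohook removals. -/
def IsCocoreOf (e : ℤ) (Θ C : Set ℤ × Set ℤ) : Prop :=
  Relation.ReflTransGen (RemoveCohook e) Θ C ∧ ¬ HasCohook e C

/-- The `n`-fold composition of a relation. -/
def RelPow {α : Type*} (R : α → α → Prop) : ℕ → α → α → Prop
  | 0 => Eq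
  | n + 1 => fun a c => ∃ b, R a b ∧ RelPow R n b c

/-- `(a, b)` (row `a`, column `b`, both `1`-indexed) is a box of the partition `μ`
(`μ` is `0`-indexed, so `μ (a-1)` is the `a`-th part `λ_a`). -/
def IsBox (μ : ℕ → ℕ) (a b : ℕ) : Prop := 1 ≤ a ∧ 1 ≤ b ∧ b ≤ μ (a - 1)

/-- `(a, b)` is an addable box of `μ`: adjoining it yields a partition. -/
def IsAddableBox (μ : ℕ → ℕ) (a b : ℕ) : Prop :=
  1 ≤ a ∧ b = μ (a - 1) + 1 ∧ (a = 1 ∨ b ≤ μ (a - 2))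

/-- `(a, b)` is a removable box of `μ`: deleting it yields a partition. -/
def IsRemovableBox (μ : ℕ → ℕ) (a b : ℕ) : Prop :=
  1 ≤ a ∧ b = μ (a - 1) ∧ 1 ≤ b ∧ μ a < b

/-- The charged content `t + b - a` of the box in row `a` and column `b`,
with respect to the charge `t`. -/
def chCont (t : ℤ) (a b : ℕ) : ℤ := t + (b : ℤ) - (a : ℤ)

/-- Selecting the component `j ∈ {1, 2}` of a bipartition. -/
def compPart (μ₁ μ₂ : ℕ → ℕ) (j : ℕ) : ℕ → ℕ := if j = 1 then μ₁ else μ₂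

/-- Selecting the component `j ∈ {1, 2}` of a pair of charges. -/
def compT (t₁ t₂ : ℤ) (j : ℕ) : ℤ := if j = 1 then t₁ else t₂

/-- The box `(a, b)` in component `j` is a good removable `i`-box of the
bipartition `(μ₁, μ₂)` with charges `(t₁, t₂)`, where `r` is the row containing
the right region: it is a removable box of charged content `≡ i (mod d)` and
there is no addable box `A` of either component with charged content `≡ i (mod d)`
such that either `A` has strictly larger charged content, or `A` has equal
charged content and lies in component `r`. -/
def IsGoodRemovableBox (d : ℤ) (μ₁ μ₂ : ℕ → ℕ) (t₁ t₂ : ℤ) (r : ℕ) (i : ℤ)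
    (j a b : ℕ) : Prop :=
  (j = 1 ∨ j = 2) ∧ IsRemovableBox (compPart μ₁ μ₂ j) a b ∧
    d ∣ chCont (compT t₁ t₂ j) a b - i ∧
    ∀ j' a' b' : ℕ, (j' = 1 ∨ j' = 2) → IsAddableBox (compPart μ₁ μ₂ j') a' b' →
      d ∣ chCont (compT t₁ t₂ j') a' b' - i →
      ¬ (chCont (compT t₁ t₂ j) a b < chCont (compT t₁ t₂ j') a' b' ∨
        (chCont (compT t₁ t₂ j') a' b' = chCont (compT t₁ t₂ j) a b ∧ j' = r))

/-- The position of a letter in the order `× < ∧ < ∨ < ∘`. -/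
def udIdx : UD → ℕ
  | UD.cross => 0
  | UD.up => 1
  | UD.dn => 2
  | UD.circ => 3

/-- The word `w₁ ⋯ w_{d/2}` reads `×^α ∧^w ∨^h ∘^β`: all `×`'s first, then all
`∧`'s, then all `∨`'s, then all `∘`'s. -/
def SortedUD (d : ℤ) (w : ℤ → UD) : Prop :=
  ∀ i j : ℤ, 1 ≤ i → i ≤ j → j ≤ d / 2 → udIdx (w i) ≤ udIdx (w j)

/-- The number of occurrences of the letter `u` in the word `w₁ ⋯ w_{d/2}`. -/
noncomputable def countUD (d : ℤ) (w : ℤ → UD) (u : UD) : ℕ :=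
  ((Finset.Icc (1 : ℤ) (d / 2)).filter fun i => w i = u).card

/-- `w'` is obtained from `w` by permuting the letters `∧` and `∨` among the
positions carrying `∧` or `∨`, leaving every `×` and `∘` in place. -/
def PermUpDn (d : ℤ) (w w' : ℤ → UD) : Prop :=
  (∀ i : ℤ, 1 ≤ i → i ≤ d / 2 →
    ((w' i = UD.cross ↔ w i = UD.cross) ∧ (w' i = UD.circ ↔ w i = UD.circ))) ∧
  countUD d w' UD.up = countUD d w UD.up

/-- Replace every letter `∧` by `∨`, leaving the other letters unchanged. -/
def replaceUp : UD → UD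
  | UD.up => UD.dn
  | u => u

section StmtEleven

variable {b T e : ℤ}

private lemma dvdShift {k A B : ℤ} (h : k ∣ A - B) : k ∣ A ↔ k ∣ B := by
  constructor
  · intro h2; simpa using h2.sub h
  · intro h2; simpa using h.add h2

/-- The color-`c` predicate on beads. -/
def pCol (e : ℤ) (Θ : Set ℤ × Set ℤ) (c z : ℤ) : Prop :=
  (z ∈ Θ.1 ∧ 2 * e ∣ z - c) ∨ (z ∈ Θ.2 ∧ 2 * e ∣ z - c - e)

/-- The number of beads of color `c` in the window `[b,T)`. -/
noncomputable def nCol (b T e : ℤ) (Θ : Set ℤ × Set ℤ) (c : ℤ) : ℕ :=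
  ((Finset.Ico b T).filter (pCol e Θ c)).card

/-- The symbol lives in the window `[b,T)`. -/
def GoodS (b T : ℤ) (Θ : Set ℤ × Set ℤ) : Prop :=
  (∀ z : ℤ, z < b → z ∈ Θ.1) ∧ (∀ z : ℤ, z < b → z ∈ Θ.2) ∧
  (∀ z ∈ Θ.1, z < T) ∧ (∀ z ∈ Θ.2, z < T)

/-- Membership predicate wrapper (to pin down decidability instances). -/
def inS (A : Set ℤ) (z : ℤ) : Prop := z ∈ A

/-- Termination measure. -/
noncomputable def measS (b T : ℤ) (Θ : Set ℤ × Set ℤ) : ℕ :=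
  (((Finset.Ico b T).filter (inS Θ.1)).sum fun z => (z - b).toNat) +
  (((Finset.Ico b T).filter (inS Θ.2)).sum fun z => (z - b).toNat)

lemma good_swap {Θ : Set ℤ × Set ℤ} (h : GoodS b T Θ) : GoodS b T (Θ.2, Θ.1) :=
  ⟨h.2.1, h.1, h.2.2.2, h.2.2.1⟩

lemma meas_swap (Θ : Set ℤ × Set ℤ) : measS b T (Θ.2, Θ.1) = measS b T Θ :=
  Nat.add_comm _ _

lemma hasCohook_swap {Θ : Set ℤ × Set ℤ} (h : ¬ HasCohook e Θ) :
    ¬ HasCohook e (Θ.2, Θ.1) := by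
  unfold HasCohook at *
  push_neg at *
  exact ⟨h.2, h.1⟩

lemma nCol_swap (Θ : Set ℤ × Set ℤ) (c : ℤ) :
    nCol b T e (Θ.2, Θ.1) c = nCol b T e Θ (c + e) := by
  unfold nCol
  apply congrArg
  apply Finset.filter_congr
  intro z _
  unfold pCol
  have h1 : (2 * e ∣ z - (c + e)) ↔ (2 * e ∣ z - c - e) := by
    rw [show z - (c + e) = z - c - e by ring]
  have h2 : (2 * e ∣ z - (c + e) - e) ↔ (2 * e ∣ z - c) :=
    dvdShift ⟨-1, by ring⟩
  rw [h1, h2]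
  tauto

lemma nCol_period (Θ : Set ℤ × Set ℤ) (c : ℤ) :
    nCol b T e Θ (c + 2 * e) = nCol b T e Θ c := by
  unfold nCol
  apply congrArg
  apply Finset.filter_congr
  intro z _
  unfold pCol
  have h1 : (2 * e ∣ z - (c + 2 * e)) ↔ (2 * e ∣ z - c) := dvdShift ⟨-1, by ring⟩
  have h2 : (2 * e ∣ z - (c + 2 * e) - e) ↔ (2 * e ∣ z - c - e) := dvdShift ⟨-1, by ring⟩
  rw [h1, h2]

lemma good_step1 (he : 1 ≤ e) {Θ : Set ℤ × Set ℤ} (hG : GoodS b T Θ)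
    {x : ℤ} (hx1 : x ∈ Θ.1) (hx2 : x - e ∉ Θ.2) :
    GoodS b T (Θ.2 ∪ {x - e}, Θ.1 \ {x}) := by
  obtain ⟨hb1, hb2, hT1, hT2⟩ := hG
  have hxb : b ≤ x - e := not_lt.1 fun h => hx2 (hb2 _ h)
  have hxT : x < T := hT1 x hx1
  refine ⟨fun z hz => Or.inl (hb2 z hz), fun z hz => ⟨hb1 z hz, ?_⟩, ?_, ?_⟩
  · simp only [Set.mem_singleton_iff]; omega
  · rintro z (hz | hz)
    · exact hT2 z hz
    · simp only [Set.mem_singleton_iff] at hz; omega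
  · rintro z ⟨hz, -⟩; exact hT1 z hz

lemma meas_step1 (he : 1 ≤ e) {Θ : Set ℤ × Set ℤ} (hG : GoodS b T Θ)
    {x : ℤ} (hx1 : x ∈ Θ.1) (hx2 : x - e ∉ Θ.2) :
    measS b T (Θ.2 ∪ {x - e}, Θ.1 \ {x}) < measS b T Θ := by
  obtain ⟨hb1, hb2, hT1, hT2⟩ := hG
  have hxb : b ≤ x - e := not_lt.1 fun h => hx2 (hb2 _ h)
  have hxT : x < T := hT1 x hx1
  have hxw : x ∈ Finset.Ico b T := by simp only [Finset.mem_Ico]; omega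
  have hxew : x - e ∈ Finset.Ico b T := by simp only [Finset.mem_Ico]; omega
  have h1 : (Finset.Ico b T).filter (inS (Θ.2 ∪ {x - e})) =
      insert (x - e) ((Finset.Ico b T).filter (inS Θ.2)) := by
    ext z
    simp only [Finset.mem_filter, Finset.mem_insert, inS, Set.mem_union,
      Set.mem_singleton_iff]
    constructor
    · rintro ⟨hw, hz | hz⟩
      · exact Or.inr ⟨hw, hz⟩
      · exact Or.inl hz
    · rintro (rfl | ⟨hw, hz⟩)
      · exact ⟨hxew, Or.inr rfl⟩
      · exact ⟨hw, Or.inl hz⟩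
  have h2 : (Finset.Ico b T).filter (inS (Θ.1 \ {x})) =
      ((Finset.Ico b T).filter (inS Θ.1)).erase x := by
    ext z
    simp only [Finset.mem_filter, Finset.mem_erase, inS, Set.mem_diff, Set.mem_singleton_iff]
    tauto
  have hxe2 : x - e ∉ (Finset.Ico b T).filter (inS Θ.2) := by
    simp only [Finset.mem_filter, inS]; tauto
  have hx1' : x ∈ (Finset.Ico b T).filter (inS Θ.1) := by
    simp only [Finset.mem_filter, inS]; exact ⟨hxw, hx1⟩
  have e1 : (((Finset.Ico b T).filter (inS Θ.1)).erase x).sum (fun z => (z - b).toNat)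
      + (x - b).toNat
      = ((Finset.Ico b T).filter (inS Θ.1)).sum (fun z => (z - b).toNat) :=
    Finset.sum_erase_add _ _ hx1'
  have e2 : (insert (x - e) ((Finset.Ico b T).filter (inS Θ.2))).sum
        (fun z => (z - b).toNat)
      = (x - e - b).toNat + ((Finset.Ico b T).filter (inS Θ.2)).sum
        (fun z => (z - b).toNat) :=
    Finset.sum_insert hxe2
  have key1 : measS b T (Θ.2 ∪ {x - e}, Θ.1 \ {x}) =
      (((Finset.Ico b T).filter (inS (Θ.2 ∪ {x - e}))).sum fun z => (z - b).toNat) +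
      (((Finset.Ico b T).filter (inS (Θ.1 \ {x}))).sum fun z => (z - b).toNat) := rfl
  have key0 : measS b T Θ =
      (((Finset.Ico b T).filter (inS Θ.1)).sum fun z => (z - b).toNat) +
      (((Finset.Ico b T).filter (inS Θ.2)).sum fun z => (z - b).toNat) := rfl
  rw [key1, key0, h1, h2, e2]
  omega

lemma nCol_step1 (he : 1 ≤ e) {Θ : Set ℤ × Set ℤ} (hG : GoodS b T Θ)
    {x : ℤ} (hx1 : x ∈ Θ.1) (hx2 : x - e ∉ Θ.2) (c : ℤ) :
    nCol b T e (Θ.2 ∪ {x - e}, Θ.1 \ {x}) c = nCol b T e Θ (c + e) := by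
  obtain ⟨hb1, hb2, hT1, hT2⟩ := hG
  have hxb : b ≤ x - e := not_lt.1 fun h => hx2 (hb2 _ h)
  have hxT : x < T := hT1 x hx1
  have hxeT : x - e < T := by omega
  have hxB : b ≤ x := by omega
  have hne : x - e ≠ x := by omega
  have hne' : x ≠ x - e := by omega
  have hee : ¬ (2 * e ∣ e) := by
    intro h
    have := Int.le_of_dvd (by omega) h
    omega
  have hA' : ∀ z : ℤ, (2 * e ∣ z - (c + e)) ↔ (2 * e ∣ z - c - e) := by
    intro z
    rw [show z - (c + e) = z - c - e by ring]
  have hB' : ∀ z : ℤ, (2 * e ∣ z - (c + e) - e) ↔ (2 * e ∣ z - c) :=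
    fun z => dvdShift ⟨-1, by ring⟩
  have hxk : (2 * e ∣ x - c - e) ↔ (2 * e ∣ x - e - c) := by
    rw [show x - c - e = x - e - c by ring]
  have hxx : (2 * e ∣ x - e - c - e) ↔ (2 * e ∣ x - c) := dvdShift ⟨-1, by ring⟩
  by_cases D : 2 * e ∣ x - e - c
  · have hDc : ¬ (2 * e ∣ x - c) := by
      intro h
      exact hee (by simpa using h.sub D)
    have hxmem : x ∈ (Finset.Ico b T).filter (pCol e Θ (c + e)) := by
      simp only [Finset.mem_filter, Finset.mem_Ico, pCol, hA', hB', hxk]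
      exact ⟨⟨hxB, hxT⟩, Or.inl ⟨hx1, D⟩⟩
    have hxenmem : x - e ∉ (Finset.Ico b T).filter (pCol e Θ (c + e)) := by
      simp only [Finset.mem_filter, Finset.mem_Ico, pCol, hA', hB', hxx]
      rintro ⟨-, ⟨-, hd⟩ | ⟨hm, -⟩⟩
      · exact hee (by simpa using D.sub hd)
      · exact hx2 hm
    have hset : (Finset.Ico b T).filter (pCol e (Θ.2 ∪ {x - e}, Θ.1 \ {x}) c) =
        insert (x - e) (((Finset.Ico b T).filter (pCol e Θ (c + e))).erase x) := by
      ext z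
      simp only [Finset.mem_insert, Finset.mem_erase, Finset.mem_filter, Finset.mem_Ico,
        pCol, Set.mem_union, Set.mem_singleton_iff, Set.mem_diff, hA', hB']
      by_cases hz1 : z = x - e
      · subst hz1
        simp only [hne, hxx, hxb, hxeT, hDc, D]
        simp [hx2]
        try tauto
      · by_cases hz2 : z = x
        · subst hz2
          simp only [hne', hxk, hDc, D, hx1]
          simp [hne']
          try tauto
        · simp only [hz1, hz2]
          simp only [iff_false, false_and, and_false, or_false, false_or]
          tauto
    unfold nCol
    rw [hset, Finset.card_insert_of_notMem (fun h => hxenmem (Finset.mem_of_mem_erase h)),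
      Finset.card_erase_of_mem hxmem]
    have : 0 < ((Finset.Ico b T).filter (pCol e Θ (c + e))).card :=
      Finset.card_pos.2 ⟨x, hxmem⟩
    omega
  · unfold nCol
    apply congrArg
    apply Finset.filter_congr
    intro z hz
    simp only [Finset.mem_Ico] at hz
    simp only [pCol, Set.mem_union, Set.mem_singleton_iff, Set.mem_diff, hA', hB']
    by_cases hz1 : z = x - e
    · subst hz1
      simp only [hne, hxx, D]
      simp [hx2, D]
      try tauto
    · by_cases hz2 : z = x
      · subst hz2
        simp only [hne', hxk, D, hx1]
        simp [hne', D]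
        try tauto
      · simp only [hz1, hz2]
        tauto

/-- Combined single-step lemma. -/
lemma step_all (he : 1 ≤ e) {Θ Θ' : Set ℤ × Set ℤ} (hG : GoodS b T Θ)
    (h : RemoveCohook e Θ Θ') :
    GoodS b T Θ' ∧ measS b T Θ' < measS b T Θ ∧
      ∀ c, nCol b T e Θ' c = nCol b T e Θ (c + e) := by
  rcases h with ⟨x, hx1, hx2, rfl⟩ | ⟨x, hx1, hx2, rfl⟩
  · exact ⟨good_step1 he hG hx1 hx2, meas_step1 he hG hx1 hx2, nCol_step1 he hG hx1 hx2⟩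
  · have hGs : GoodS b T (Θ.2, Θ.1) := good_swap hG
    have h1 := good_step1 (Θ := (Θ.2, Θ.1)) he hGs hx1 hx2
    have h2 := meas_step1 (Θ := (Θ.2, Θ.1)) he hGs hx1 hx2
    have h3 := nCol_step1 (Θ := (Θ.2, Θ.1)) he hGs hx1 hx2
    refine ⟨⟨h1.2.1, h1.1, h1.2.2.2, h1.2.2.1⟩, ?_, ?_⟩
    · calc measS b T (Θ.2 \ {x}, Θ.1 ∪ {x - e})
          = measS b T (Θ.1 ∪ {x - e}, Θ.2 \ {x}) := (meas_swap _).symm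
        _ < measS b T (Θ.2, Θ.1) := h2
        _ = measS b T Θ := meas_swap Θ
    · intro c
      have hs : nCol b T e (Θ.2 \ {x}, Θ.1 ∪ {x - e}) c
          = nCol b T e (Θ.1 ∪ {x - e}, Θ.2 \ {x}) (c + e) :=
        nCol_swap (Θ := (Θ.1 ∪ {x - e}, Θ.2 \ {x})) c
      rw [hs, h3 (c + e), nCol_swap (Θ := Θ) (c + e + e)]
      rw [show c + e + e + e = (c + e) + 2 * e by ring, nCol_period]

lemma reach_inv (he : 1 ≤ e) {Θ C : Set ℤ × Set ℤ}
    (h : Relation.ReflTransGen (RemoveCohook e) Θ C) (hG : GoodS b T Θ) :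
    GoodS b T C ∧ ((∀ c, nCol b T e C c = nCol b T e Θ c) ∨
      (∀ c, nCol b T e C c = nCol b T e Θ (c + e))) := by
  induction h with
  | refl => exact ⟨hG, Or.inl fun c => rfl⟩
  | tail hab hbc ih =>
    obtain ⟨hGB, halt⟩ := ih
    obtain ⟨hGC, -, hn⟩ := step_all he hGB hbc
    refine ⟨hGC, ?_⟩
    rcases halt with h | h
    · exact Or.inr fun c => by rw [hn c, h (c + e)]
    · refine Or.inl fun c => ?_
      rw [hn c, h (c + e)]
      rw [show c + e + e = c + 2 * e by ring, nCol_period]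

lemma exists_cocore (he : 1 ≤ e) :
    ∀ n : ℕ, ∀ Θ : Set ℤ × Set ℤ, GoodS b T Θ → measS b T Θ ≤ n →
      ∃ C, Relation.ReflTransGen (RemoveCohook e) Θ C ∧ ¬ HasCohook e C := by
  intro n
  induction n with
  | zero =>
    intro Θ hG hm
    by_cases h : HasCohook e Θ
    · exfalso
      rcases h with ⟨x, hx1, hx2⟩ | ⟨x, hx1, hx2⟩
      · have := (step_all he hG (Or.inl ⟨x, hx1, hx2, rfl⟩)).2.1
        omega
      · have := (step_all he hG (Or.inr ⟨x, hx1, hx2, rfl⟩)).2.1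
        omega
    · exact ⟨Θ, Relation.ReflTransGen.refl, h⟩
  | succ n ih =>
    intro Θ hG hm
    by_cases h : HasCohook e Θ
    · rcases h with ⟨x, hx1, hx2⟩ | ⟨x, hx1, hx2⟩
      · have hstep : RemoveCohook e Θ (Θ.2 ∪ {x - e}, Θ.1 \ {x}) :=
          Or.inl ⟨x, hx1, hx2, rfl⟩
        obtain ⟨hG', hlt, -⟩ := step_all he hG hstep
        obtain ⟨C, hC, hC2⟩ := ih _ hG' (by omega)
        exact ⟨C, Relation.ReflTransGen.head hstep hC, hC2⟩
      · have hstep : RemoveCohook e Θ (Θ.2 \ {x}, Θ.1 ∪ {x - e}) :=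
          Or.inr ⟨x, hx1, hx2, rfl⟩
        obtain ⟨hG', hlt, -⟩ := step_all he hG hstep
        obtain ⟨C, hC, hC2⟩ := ih _ hG' (by omega)
        exact ⟨C, Relation.ReflTransGen.head hstep hC, hC2⟩
    · exact ⟨Θ, Relation.ReflTransGen.refl, h⟩

/-- The chain membership function. -/
def gC (e : ℤ) (Θ : Set ℤ × Set ℤ) (z₀ m : ℤ) : Prop :=
  if Even m then z₀ + m * e ∈ Θ.1 else z₀ + m * e ∈ Θ.2

lemma gC_step {Θ : Set ℤ × Set ℤ} (ht : ¬ HasCohook e Θ) (z₀ m : ℤ)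
    (h : gC e Θ z₀ m) : gC e Θ z₀ (m - 1) := by
  unfold HasCohook at ht
  push_neg at ht
  obtain ⟨h1, h2⟩ := ht
  unfold gC at *
  by_cases hm : Even m
  · have hm' : ¬ Even (m - 1) := by rw [Int.even_iff] at *; omega
    rw [if_pos hm] at h
    rw [if_neg hm']
    have := h1 _ h
    rwa [show z₀ + (m - 1) * e = z₀ + m * e - e by ring]
  · have hm' : Even (m - 1) := by rw [Int.even_iff] at hm ⊢; omega
    rw [if_neg hm] at h
    rw [if_pos hm']
    have := h2 _ h
    rwa [show z₀ + (m - 1) * e = z₀ + m * e - e by ring]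

lemma gC_mono {Θ : Set ℤ × Set ℤ} (ht : ¬ HasCohook e Θ) (z₀ : ℤ) {m m' : ℤ}
    (hle : m' ≤ m) (h : gC e Θ z₀ m) : gC e Θ z₀ m' := by
  have key : ∀ k : ℕ, gC e Θ z₀ (m - k) := by
    intro k
    induction k with
    | zero => simpa using h
    | succ k ih =>
      have h2 := gC_step ht z₀ (m - k) ih
      have hcast : m - ((k + 1 : ℕ) : ℤ) = m - (k : ℤ) - 1 := by push_cast; ring
      rw [hcast]
      exact h2
  have h3 := key (m - m').toNat
  rwa [show m - ((m - m').toNat : ℤ) = m' by omega] at h3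

lemma mem_iff_count (he : 1 ≤ e) {C : Set ℤ × Set ℤ} (hG : GoodS b T C)
    (ht : ¬ HasCohook e C) {z₀ : ℤ} (hz : b ≤ z₀) (hz2 : z₀ < T) :
    (z₀ ∈ C.1 ↔ 1 - (-((z₀ - b) / e)) ≤ (nCol b T e C z₀ : ℤ)) := by
  obtain ⟨hb1, hb2, hT1, hT2⟩ := hG
  have he0 : (0 : ℤ) < e := by omega
  have he0' : e ≠ 0 := by omega
  set mb : ℤ := -((z₀ - b) / e) with hmb
  have hmb0 : mb ≤ 0 := by
    have : 0 ≤ (z₀ - b) / e := Int.ediv_nonneg (by omega) (by omega)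
    omega
  have hwin : ∀ m : ℤ, b ≤ z₀ + m * e ↔ mb ≤ m := by
    intro m
    rw [hmb, neg_le, Int.le_ediv_iff_mul_le he0]
    constructor <;> intro h <;> nlinarith [h]
  have hg_pcol : ∀ m : ℤ, gC e C z₀ m → pCol e C z₀ (z₀ + m * e) := by
    intro m hm
    unfold gC at hm
    by_cases hme : Even m
    · rw [if_pos hme] at hm
      obtain ⟨t, ht2⟩ := hme
      exact Or.inl ⟨hm, ⟨t, by rw [ht2]; ring⟩⟩
    · rw [if_neg hme] at hm
      obtain ⟨t, ht2⟩ := Int.not_even_iff_odd.1 hme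
      exact Or.inr ⟨hm, ⟨t, by rw [ht2]; ring⟩⟩
  have hpcol_g : ∀ z ∈ (Finset.Ico b T).filter (pCol e C z₀),
      ∃ m : ℤ, z = z₀ + m * e ∧ gC e C z₀ m := by
    intro z hzf
    simp only [Finset.mem_filter, Finset.mem_Ico] at hzf
    obtain ⟨⟨hzb, hzT⟩, hp⟩ := hzf
    rcases hp with ⟨hm, t, hd⟩ | ⟨hm, t, hd⟩
    · refine ⟨2 * t, by linarith [hd], ?_⟩
      unfold gC
      rw [if_pos ⟨t, by ring⟩]
      rwa [show z₀ + 2 * t * e = z by linarith [hd]]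
    · refine ⟨2 * t + 1, by linarith [hd], ?_⟩
      unfold gC
      rw [if_neg (by rw [Int.even_iff]; omega)]
      rwa [show z₀ + (2 * t + 1) * e = z by linarith [hd]]
  constructor
  · intro hmem
    have hg0 : gC e C z₀ 0 := by
      unfold gC
      rw [if_pos Even.zero]
      simpa using hmem
    have hinj : ∀ m ∈ Finset.Icc mb 0,
        (z₀ + m * e) ∈ (Finset.Ico b T).filter (pCol e C z₀) := by
      intro m hmf
      simp only [Finset.mem_Icc] at hmf
      have hgm : gC e C z₀ m := gC_mono ht z₀ hmf.2 hg0
      simp only [Finset.mem_filter, Finset.mem_Ico]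
      refine ⟨⟨(hwin m).2 hmf.1, ?_⟩, hg_pcol m hgm⟩
      nlinarith [hmf.2]
    have hcard : (Finset.Icc mb 0).card ≤ ((Finset.Ico b T).filter (pCol e C z₀)).card := by
      apply Finset.card_le_card_of_injOn (fun m => z₀ + m * e) hinj
      intro a ha a' ha' hEq
      simp only at hEq
      have : a * e = a' * e := by omega
      exact mul_right_cancel₀ he0' this
    rw [Int.card_Icc] at hcard
    unfold nCol
    omega
  · intro hcount
    by_contra hmem
    have hnotg : ∀ m : ℤ, 0 ≤ m → ¬ gC e C z₀ m := by
      intro m hm0 hgm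
      have h4 := gC_mono ht z₀ hm0 hgm
      unfold gC at h4
      rw [if_pos Even.zero] at h4
      simp only [zero_mul, add_zero] at h4
      exact hmem h4
    have hcard : ((Finset.Ico b T).filter (pCol e C z₀)).card ≤ (Finset.Icc mb (-1)).card := by
      apply Finset.card_le_card_of_injOn (fun z => (z - z₀) / e)
      · intro z hzf
        obtain ⟨m, rfl, hgm⟩ := hpcol_g z hzf
        have hmm : (z₀ + m * e - z₀) / e = m := by
          rw [show z₀ + m * e - z₀ = m * e by ring]
          exact Int.mul_ediv_cancel m he0'
        simp only [Finset.mem_coe, Finset.mem_Icc, hmm]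
        simp only [Finset.mem_coe, Finset.mem_filter, Finset.mem_Ico] at hzf
        constructor
        · exact (hwin m).1 hzf.1.1
        · by_contra hc
          exact hnotg m (by omega) hgm
      · intro z hzf z' hzf' hEq
        obtain ⟨m, rfl, -⟩ := hpcol_g z hzf
        obtain ⟨m', rfl, -⟩ := hpcol_g z' hzf'
        simp only at hEq
        rw [show z₀ + m * e - z₀ = m * e by ring, show z₀ + m' * e - z₀ = m' * e by ring,
          Int.mul_ediv_cancel m he0', Int.mul_ediv_cancel m' he0'] at hEq
        rw [hEq]
    rw [Int.card_Icc] at hcard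
    unfold nCol at hcount
    omega

lemma det_row1 (he : 1 ≤ e) {C C' : Set ℤ × Set ℤ} (hG : GoodS b T C) (hG' : GoodS b T C')
    (ht : ¬ HasCohook e C) (ht' : ¬ HasCohook e C')
    (hn : ∀ c, nCol b T e C c = nCol b T e C' c) : C.1 = C'.1 := by
  ext z₀
  by_cases hlow : z₀ < b
  · simp only [hG.1 z₀ hlow, hG'.1 z₀ hlow]
  · by_cases hhigh : T ≤ z₀
    · constructor
      · intro h; exact absurd (hG.2.2.1 z₀ h) (by omega)
      · intro h; exact absurd (hG'.2.2.1 z₀ h) (by omega)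
    · rw [mem_iff_count he ⟨hG.1, hG.2.1, hG.2.2.1, hG.2.2.2⟩ ht (by omega) (by omega),
        mem_iff_count he ⟨hG'.1, hG'.2.1, hG'.2.2.1, hG'.2.2.2⟩ ht' (by omega) (by omega),
        hn z₀]

lemma det_full (he : 1 ≤ e) {C C' : Set ℤ × Set ℤ} (hG : GoodS b T C) (hG' : GoodS b T C')
    (ht : ¬ HasCohook e C) (ht' : ¬ HasCohook e C')
    (hn : ∀ c, nCol b T e C c = nCol b T e C' c) : C = C' := by
  have h1 : C.1 = C'.1 := det_row1 he hG hG' ht ht' hn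
  have hns : ∀ c, nCol b T e (C.2, C.1) c = nCol b T e (C'.2, C'.1) c := by
    intro c
    rw [nCol_swap, nCol_swap, hn]
  have h2 : C.2 = C'.2 :=
    det_row1 he (good_swap hG) (good_swap hG') (hasCohook_swap ht) (hasCohook_swap ht') hns
  exact Prod.ext h1 h2

end StmtEleven


/-- Every `d`-small symbol admits a `d/2`-cocore, and any two
`d/2`-cocores of it are equal or obtained from one another by interchanging the two
rows. -/
theorem stmt11 (d : ℤ) (hd : 2 ≤ d) (hdE : Even d)
    (X₁ X₂ : Set ℤ) (hX₁ : IsBetaSet X₁) (hX₂ : IsBetaSet X₂)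
    (hsm : IsDSmall d X₁ X₂) :
    (∃ C : Set ℤ × Set ℤ, IsCocoreOf (d / 2) (X₁, X₂) C) ∧
    ∀ C C' : Set ℤ × Set ℤ, IsCocoreOf (d / 2) (X₁, X₂) C →
      IsCocoreOf (d / 2) (X₁, X₂) C' → C' = C ∨ C' = (C.2, C.1) := by
  obtain ⟨⟨c₁, hc₁⟩, ⟨C₁, hC₁⟩⟩ := hX₁
  obtain ⟨⟨c₂, hc₂⟩, ⟨C₂, hC₂⟩⟩ := hX₂
  have he : 1 ≤ d / 2 := by omega
  have hG : GoodS (min c₁ c₂) (max C₁ C₂) (X₁, X₂) := by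
    refine ⟨fun z hz => hc₁ z (by omega), fun z hz => hc₂ z (by omega), ?_, ?_⟩
    · intro z hz
      by_contra h
      exact hC₁ z (by omega) hz
    · intro z hz
      by_contra h
      exact hC₂ z (by omega) hz
  constructor
  · obtain ⟨C, h1, h2⟩ := exists_cocore he (measS (min c₁ c₂) (max C₁ C₂) (X₁, X₂))
      (X₁, X₂) hG le_rfl
    exact ⟨C, h1, h2⟩
  · intro C C' hC hC'
    obtain ⟨hGC, haltC⟩ := reach_inv he hC.1 hG
    obtain ⟨hGC', haltC'⟩ := reach_inv he hC'.1 hG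
    have htC := hC.2
    have htC' := hC'.2
    rcases haltC with hL | hR <;> rcases haltC' with hL' | hR'
    · left
      exact det_full he hGC' hGC htC' htC (fun c => by rw [hL' c, hL c])
    · right
      apply det_full he hGC' (good_swap hGC) htC' (hasCohook_swap htC)
      intro c
      rw [nCol_swap, hL (c + d / 2), hR' c]
    · right
      apply det_full he hGC' (good_swap hGC) htC' (hasCohook_swap htC)
      intro c
      rw [nCol_swap, hR (c + d / 2), hL' c,
        show c + d / 2 + d / 2 = c + 2 * (d / 2) by ring, nCol_period]
    · left
      exact det_full he hGC' hGC htC' htC (fun c => by rw [hR' c, hR c])
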